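/- arXiv:1608.00155 — 6 statements merged into one kernel-verified Lean document; each statement's English description precedes it below -/
import Mathlib

section
/- Let $p = (p_1,\ldots,p_N)$ be a probability distribution on $H = \{1,\ldots,N\}$ and $Y_n$ the number of distinct values in $n$ i.i.d. draws from $p$. Then for $1 \le k \le N$, $P(Y_n \le k) = \sum_{A \subseteq H, |A| \le k} (-1)^{k-|A|} \binom{N-|A|-1}{k-|A|} p_A^n$, where $p_A = \sum_{i\in A} p_i$. -/
/-!
Give an outcome `ω` the weight `∏ j, p (ω j)`; then `p_A ^ n` is the total weight of the outcomes
whose image lies in `A`. The coefficient `c A = ∑_{B ⊇ A, |B| ≤ k} (-1) ^ |B \ A|` is the Möbius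
transform of the indicator of `|B| ≤ k` on the lattice of subsets, so summing `c A` over the
supersets `A` of `S` gives `1` if `|S| ≤ k` and `0` otherwise. Hence `∑_A c A * p_A ^ n` is
`P(Y_n ≤ k)`, and a partial alternating sum of binomial coefficients evaluates `c A` to
`(-1) ^ (k - |A|) * C(N - |A| - 1, k - |A|)`.
-/

/-- The probability of an event `E` for `n` i.i.d. draws from the distribution `p`
on `{1, …, N}`: the sum of the product weights of the outcome sequences in `E`. -/
noncomputable def prob {N : ℕ} (p : Fin N → ℝ) {n : ℕ} (E : Set (Fin n → Fin N)) : ℝ :=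
  ∑ ω : Fin n → Fin N, Set.indicator E (fun ω => ∏ i, p (ω i)) ω

/-- The number of distinct values drawn, `Y_n`. -/
noncomputable def distinctCount {N n : ℕ} (ω : Fin n → Fin N) : ℕ :=
  (Finset.univ.image ω).card

open Finset

theorem Int.alternating_sum_range_choose_of_le {r m : ℕ} (h : r ≤ m) :
    ∑ j ∈ Finset.range (r + 1), (-1 : ℤ) ^ j * m.choose j = (-1) ^ r * (m - 1).choose r := by
  cases m with
  | zero =>
    obtain rfl : r = 0 := by omega
    simp
  | succ m => simpa using Int.alternating_sum_range_choose_eq_choose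

theorem Finset.sum_Icc_neg_one_pow_card_sdiff {α : Type*} [DecidableEq α] {S B : Finset α}
    (h : S ⊆ B) : ∑ A ∈ Icc S B, (-1 : ℤ) ^ #(B \ A) = if S = B then 1 else 0 := by
  rw [sum_nbij' (B \ ·) (B \ ·) (t := (B \ S).powerset) (g := fun C => (-1 : ℤ) ^ #C)]
  · rw [sum_powerset_neg_one_pow_card]
    exact if_congr (sdiff_eq_empty_iff_subset.trans ⟨h.antisymm, Eq.ge⟩) rfl rfl
  · intro A hA
    simp only [mem_Icc, mem_powerset] at hA ⊢
    exact sdiff_subset_sdiff le_rfl hA.1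
  · intro C hC
    simp only [mem_Icc, mem_powerset, subset_sdiff] at hC ⊢
    exact ⟨⟨h, hC.2.symm⟩, sdiff_subset⟩
  · intro A hA
    exact sdiff_sdiff_eq_self (mem_Icc.1 hA).2
  · intro C hC
    exact sdiff_sdiff_eq_self ((mem_powerset.1 hC).trans sdiff_subset)
  · intro A _
    rfl

section

variable {α : Type*} [Fintype α] [DecidableEq α]

def supersetSignSum (k : ℕ) (A : Finset α) : ℤ :=
  ∑ B with A ⊆ B ∧ #B ≤ k, (-1) ^ #(B \ A)

theorem supersetSignSum_eq {k : ℕ} {A : Finset α} (hA : #A ≤ k) (hk : k ≤ Fintype.card α) :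
    supersetSignSum k A = (-1) ^ (k - #A) * (Fintype.card α - #A - 1).choose (k - #A) := by
  have hcomplement : supersetSignSum k A
      = ∑ C ∈ Aᶜ.powerset, if #C ≤ k - #A then (-1 : ℤ) ^ #C else 0 := by
    rw [← sum_filter]
    refine sum_nbij' (· \ A) (A ∪ ·) ?_ ?_ ?_ ?_ ?_
    · intro B hB
      simp only [mem_filter, mem_univ, true_and, mem_powerset] at hB ⊢
      rw [card_sdiff_of_subset hB.1]
      exact ⟨fun x hx => mem_compl.2 (mem_sdiff.1 hx).2, by omega⟩
    · intro C hC
      simp only [mem_filter, mem_univ, true_and, mem_powerset,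
        subset_compl_iff_disjoint_left] at hC ⊢
      rw [card_union_of_disjoint hC.1]
      exact ⟨subset_union_left, by omega⟩
    · intro B hB
      exact union_sdiff_of_subset (mem_filter.1 hB).2.1
    · intro C hC
      exact union_sdiff_cancel_left
        (subset_compl_iff_disjoint_left.1 (mem_powerset.1 (mem_filter.1 hC).1))
    · intro B _
      rfl
  rw [hcomplement, sum_powerset_apply_card (fun j => if j ≤ k - #A then (-1 : ℤ) ^ j else 0),
    card_compl, ← sum_subset (s₁ := range (k - #A + 1)) (range_subset_range.2 (by omega)),
    ← Int.alternating_sum_range_choose_of_le (by omega)]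
  · refine sum_congr rfl fun m hm => ?_
    rw [if_pos (Nat.lt_succ_iff.1 (mem_range.1 hm)), nsmul_eq_mul, mul_comm]
  · intro m _ hm
    rw [if_neg (by simpa [Nat.lt_succ_iff] using hm), smul_zero]

theorem sum_supersetSignSum (k : ℕ) (S : Finset α) :
    ∑ A with S ⊆ A ∧ #A ≤ k, supersetSignSum k A = if #S ≤ k then 1 else 0 := by
  unfold supersetSignSum
  rw [sum_comm' (t' := {B | #B ≤ k}) (s' := fun B => Icc S B)]
  · calc ∑ B with #B ≤ k, ∑ A ∈ Icc S B, (-1 : ℤ) ^ #(B \ A)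
        = ∑ B with #B ≤ k, if S = B then 1 else 0 := by
          refine sum_congr rfl fun B _ => ?_
          by_cases h : S ⊆ B
          · exact sum_Icc_neg_one_pow_card_sdiff h
          · rw [Icc_eq_empty h, sum_empty, if_neg (fun h' => h h'.le)]
      _ = _ := by rw [sum_ite_eq]; simp
  · intro A B
    simp only [mem_filter, mem_univ, true_and, mem_Icc]
    exact ⟨fun ⟨⟨hSA, _⟩, hAB, hB⟩ => ⟨⟨hSA, hAB⟩, hB⟩,
      fun ⟨⟨hSA, hAB⟩, hB⟩ => ⟨⟨hSA, (card_le_card hAB).trans hB⟩, hAB, hB⟩⟩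

theorem sum_prod_of_card_image_le {R : Type*} [CommRing R] (p : α → R) (n : ℕ) {k : ℕ}
    (hk : k ≤ Fintype.card α) :
    ∑ ω : Fin n → α with #(univ.image ω) ≤ k, ∏ j, p (ω j)
      = ∑ A with #A ≤ k,
          (-1) ^ (k - #A) * ((Fintype.card α - #A - 1).choose (k - #A) : R) * (∑ i ∈ A, p i) ^ n :=
  calc ∑ ω : Fin n → α with #(univ.image ω) ≤ k, ∏ j, p (ω j)
      = ∑ ω : Fin n → α, (∏ j, p (ω j)) *
          ∑ A with univ.image ω ⊆ A ∧ #A ≤ k, (supersetSignSum k A : R) := by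
        rw [sum_filter]
        refine sum_congr rfl fun ω _ => ?_
        rw [← Int.cast_sum, sum_supersetSignSum]
        split_ifs <;> simp
    _ = ∑ A with #A ≤ k, (supersetSignSum k A : R) *
          ∑ ω ∈ Fintype.piFinset fun _ : Fin n => A, ∏ j, p (ω j) := by
        simp_rw [mul_sum]
        rw [sum_comm']
        · exact sum_congr rfl fun A _ => sum_congr rfl fun ω _ => mul_comm _ _
        · intro ω A
          simp [Fintype.mem_piFinset, image_subset_iff]
    _ = _ := by
        refine sum_congr rfl fun A hA => ?_
        rw [supersetSignSum_eq (mem_filter.1 hA).2 hk, sum_pow']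
        push_cast
        rfl

end

theorem stmt_3_general (N n k : ℕ) (p : Fin N → ℝ) (hkN : k ≤ N) :
    prob p {ω : Fin n → Fin N | distinctCount ω ≤ k}
      = ∑ A ∈ Finset.univ.powerset.filter (fun A : Finset (Fin N) => A.card ≤ k),
          (-1 : ℝ) ^ (k - A.card) * (Nat.choose (N - A.card - 1) (k - A.card)) *
            (∑ i ∈ A, p i) ^ n := by
  have h := sum_prod_of_card_image_le p n (k := k) (by simpa using hkN)
  rw [Fintype.card_fin] at h
  rw [powerset_univ, ← h, prob, sum_filter]
  simp [Set.indicator_apply, distinctCount]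

/-- `P(Y_n ≤ k) = ∑_{A ⊆ H, |A| ≤ k} (-1)^{k-|A|} C(N-|A|-1, k-|A|) p_A^n`. -/
theorem stmt_3 (N n k : ℕ) (p : Fin N → ℝ) (hp : ∀ i, 0 ≤ p i) (hsum : ∑ i, p i = 1)
    (hk1 : 1 ≤ k) (hkN : k ≤ N) :
    prob p {ω : Fin n → Fin N | distinctCount ω ≤ k}
      = ∑ A ∈ Finset.univ.powerset.filter (fun A : Finset (Fin N) => A.card ≤ k),
          (-1 : ℝ) ^ (k - A.card) * (Nat.choose (N - A.card - 1) (k - A.card)) *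
            (∑ i ∈ A, p i) ^ n :=
  stmt_3_general N n k p hkN
end

section
/- Let $q_1,\ldots,q_M$ be nonnegative reals, $I=\{1,\ldots,M\}$, and $q_A = \sum_{i\in A} q_i$ for $A \subseteq I$. Then for any integers $m \ge 0$ and $0 \le r \le M$, $\sum_{A \subseteq I, |A| \le r} (-1)^{r-|A|} \binom{M-|A|}{r-|A|} q_A^m \geq 0$. -/
open Finset

lemma altcard {ι : Type*} [DecidableEq ι] (S : Finset ι) :
    ∑ C ∈ S.powerset, (-1 : ℝ) ^ C.card = if S = ∅ then 1 else 0 := by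
  have h := Finset.sum_powerset_neg_one_pow_card (x := S)
  have := congrArg (fun z : ℤ => (z : ℝ)) h
  push_cast at this
  convert this using 2 <;> simp

lemma altA {ι : Type*} [DecidableEq ι] (S : Finset ι) :
    ∑ C ∈ S.powerset, (-1 : ℝ) ^ (S.card - C.card) = if S = ∅ then 1 else 0 := by
  have key : ∀ C ∈ S.powerset, (-1 : ℝ) ^ (S.card - C.card)
      = (-1 : ℝ) ^ S.card * (-1 : ℝ) ^ C.card := by
    intro C hC
    have hk : C.card ≤ S.card := card_le_card (mem_powerset.mp hC)
    have h1 : (-1 : ℝ) ^ (S.card - C.card) * ((-1 : ℝ) ^ C.card * (-1 : ℝ) ^ C.card)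
        = (-1 : ℝ) ^ S.card * (-1 : ℝ) ^ C.card := by
      rw [← mul_assoc, ← pow_add, Nat.sub_add_cancel hk]
    have h2 : ((-1 : ℝ) ^ C.card * (-1 : ℝ) ^ C.card) = 1 := by
      rw [← pow_add, ← two_mul, pow_mul]; norm_num
    rw [h2, mul_one] at h1; exact h1
  rw [Finset.sum_congr rfl key, ← Finset.mul_sum, altcard]
  split
  · subst ‹S = ∅›; simp
  · simp

lemma altfilter {ι : Type*} [DecidableEq ι] (A R : Finset ι) (hRA : R ⊆ A) :
    0 ≤ ∑ B ∈ A.powerset.filter (fun B => R ⊆ B), (-1 : ℝ) ^ (A.card - B.card) := by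
  have himg : A.powerset.filter (fun B => R ⊆ B)
      = (A \ R).powerset.image (fun C => R ∪ C) := by
    ext B
    simp only [mem_filter, mem_powerset, mem_image]
    constructor
    · rintro ⟨hBA, hRB⟩
      exact ⟨B \ R, sdiff_subset_sdiff hBA (le_refl R), by
        rw [Finset.union_sdiff_of_subset hRB]⟩
    · rintro ⟨C, hC, rfl⟩
      exact ⟨union_subset hRA (hC.trans (sdiff_subset)), subset_union_left⟩
  have hinj : ∀ C₁ ∈ (A \ R).powerset, ∀ C₂ ∈ (A \ R).powerset,
      R ∪ C₁ = R ∪ C₂ → C₁ = C₂ := by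
    intro C₁ h₁ C₂ h₂ h
    rw [mem_powerset] at h₁ h₂
    have d₁ : Disjoint R C₁ := (disjoint_sdiff.mono_right h₁)
    have d₂ : Disjoint R C₂ := (disjoint_sdiff.mono_right h₂)
    have h' : (R ∪ C₁) \ R = (R ∪ C₂) \ R := by rw [h]
    rwa [union_sdiff_cancel_left d₁, union_sdiff_cancel_left d₂] at h'
  rw [himg, Finset.sum_image hinj]
  have hcard : ∀ C ∈ (A \ R).powerset,
      A.card - (R ∪ C).card = (A \ R).card - C.card := by
    intro C hC
    have hC' := mem_powerset.mp hC
    have d : Disjoint R C := disjoint_sdiff.mono_right hC'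
    rw [card_union_of_disjoint d, card_sdiff_of_subset hRA]
    have := card_le_card hRA
    omega
  have : ∑ C ∈ (A \ R).powerset, (-1 : ℝ) ^ (A.card - (R ∪ C).card)
      = ∑ C ∈ (A \ R).powerset, (-1 : ℝ) ^ ((A \ R).card - C.card) := by
    exact Finset.sum_congr rfl (fun C hC => by rw [hcard C hC])
  rw [this, altA]
  split <;> norm_num

lemma expandpow {M m : ℕ} (q : Fin M → ℝ) (B : Finset (Fin M)) :
    (∑ i ∈ B, q i) ^ m
      = ∑ g ∈ Fintype.piFinset (fun _ : Fin m => B), ∏ j, q (g j) := by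
  rw [← Finset.prod_univ_sum]
  simp [Finset.prod_const]

lemma inner_nonneg {M : ℕ} (m : ℕ) (q : Fin M → ℝ) (hq : ∀ i, 0 ≤ q i)
    (A : Finset (Fin M)) :
    0 ≤ ∑ B ∈ A.powerset, (-1 : ℝ) ^ (A.card - B.card) * (∑ i ∈ B, q i) ^ m := by
  simp_rw [expandpow, Finset.mul_sum]
  rw [Finset.sum_comm' (t' := Fintype.piFinset (fun _ : Fin m => A))
    (s' := fun g => A.powerset.filter (fun B => ∀ j, g j ∈ B)) (by
      intro B g
      simp only [mem_powerset, Fintype.mem_piFinset, mem_filter]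
      constructor
      · rintro ⟨hBA, hg⟩
        exact ⟨⟨hBA, hg⟩, fun j => hBA (hg j)⟩
      · rintro ⟨⟨hBA, hg⟩, _⟩
        exact ⟨hBA, hg⟩)]
  apply Finset.sum_nonneg
  intro g hg
  have hgA : ∀ j, g j ∈ A := by
    simpa [Fintype.mem_piFinset] using hg
  rw [← Finset.sum_mul]
  apply mul_nonneg
  · have hfc : A.powerset.filter (fun B => ∀ j, g j ∈ B)
        = A.powerset.filter (fun B => Finset.image g univ ⊆ B) := by
      apply Finset.filter_congr
      intro B _
      simp [Finset.image_subset_iff]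
    rw [hfc]
    exact altfilter A (Finset.image g univ) (Finset.image_subset_iff.mpr (fun j _ => hgA j))
  · exact Finset.prod_nonneg (fun j _ => hq _)

lemma countlem {M r : ℕ} (hr : r ≤ M) (B : Finset (Fin M)) (hB : B.card ≤ r) :
    ((Finset.univ.powersetCard r).filter (fun A : Finset (Fin M) => B ⊆ A)).card
      = (M - B.card).choose (r - B.card) := by
  have himg : (Finset.univ.powersetCard r).filter (fun A : Finset (Fin M) => B ⊆ A)
      = ((Finset.univ \ B).powersetCard (r - B.card)).image (fun C => B ∪ C) := by
    ext A
    simp only [mem_filter, mem_powersetCard, mem_image]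
    constructor
    · rintro ⟨⟨_, hAr⟩, hBA⟩
      refine ⟨A \ B, ⟨sdiff_subset_sdiff (subset_univ A) (le_refl B), ?_⟩, by
        rw [Finset.union_sdiff_of_subset hBA]⟩
      rw [card_sdiff_of_subset hBA, hAr]
    · rintro ⟨C, ⟨hCu, hCc⟩, rfl⟩
      have d : Disjoint B C := disjoint_sdiff.mono_right hCu
      refine ⟨⟨subset_univ _, ?_⟩, subset_union_left⟩
      rw [card_union_of_disjoint d, hCc]
      omega
  rw [himg]
  rw [Finset.card_image_of_injOn (fun C₁ h₁ C₂ h₂ h => by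
      simp only [Finset.mem_coe, mem_powersetCard] at h₁ h₂
      have d₁ : Disjoint B C₁ := disjoint_sdiff.mono_right h₁.1
      have d₂ : Disjoint B C₂ := disjoint_sdiff.mono_right h₂.1
      have h' : (B ∪ C₁) \ B = (B ∪ C₂) \ B := by rw [show B ∪ C₁ = B ∪ C₂ from h]
      rwa [union_sdiff_cancel_left d₁, union_sdiff_cancel_left d₂] at h')]
  rw [card_powersetCard, card_sdiff_of_subset (subset_univ B), card_univ, Fintype.card_fin]

/-- Lemma 6.2 (first part): for nonnegative reals `q_1, …, q_M` and `0 ≤ r ≤ M`,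
`∑_{A ⊆ I, |A| ≤ r} (-1)^{r-|A|} C(M-|A|, r-|A|) q_A^m ≥ 0`. -/
theorem stmt_8 (M m r : ℕ) (q : Fin M → ℝ) (hq : ∀ i, 0 ≤ q i) (hr : r ≤ M) :
    0 ≤ ∑ A ∈ Finset.univ.powerset.filter (fun A : Finset (Fin M) => A.card ≤ r),
          (-1 : ℝ) ^ (r - A.card) * (Nat.choose (M - A.card) (r - A.card)) *
            (∑ i ∈ A, q i) ^ m := by
  have key : ∑ A ∈ Finset.univ.powerset.filter (fun A : Finset (Fin M) => A.card ≤ r),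
          (-1 : ℝ) ^ (r - A.card) * (Nat.choose (M - A.card) (r - A.card)) *
            (∑ i ∈ A, q i) ^ m
      = ∑ A ∈ Finset.univ.powersetCard r,
          ∑ B ∈ A.powerset, (-1 : ℝ) ^ (A.card - B.card) * (∑ i ∈ B, q i) ^ m := by
    rw [Finset.sum_comm' (s := Finset.univ.powersetCard r) (t := fun A => A.powerset)
      (t' := Finset.univ.powerset.filter (fun A : Finset (Fin M) => A.card ≤ r))
      (s' := fun B => (Finset.univ.powersetCard r).filter (fun A => B ⊆ A)) (by
        intro A B
        simp only [mem_powersetCard, mem_powerset, mem_filter]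
        constructor
        · rintro ⟨⟨hAu, hAr⟩, hBA⟩
          refine ⟨⟨⟨hAu, hAr⟩, hBA⟩, subset_univ _, ?_⟩
          rw [← hAr]; exact card_le_card hBA
        · rintro ⟨⟨⟨hAu, hAr⟩, hBA⟩, _⟩
          exact ⟨⟨hAu, hAr⟩, hBA⟩)]
    apply Finset.sum_congr rfl
    intro B hB
    simp only [mem_filter, mem_powerset] at hB
    have step : ∀ A ∈ (Finset.univ.powersetCard r).filter (fun A => B ⊆ A),
        (-1 : ℝ) ^ (A.card - B.card) * (∑ i ∈ B, q i) ^ m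
          = (-1 : ℝ) ^ (r - B.card) * (∑ i ∈ B, q i) ^ m := by
      intro A hA
      simp only [mem_filter, mem_powersetCard] at hA
      rw [hA.1.2]
    rw [Finset.sum_congr rfl step, Finset.sum_const, countlem hr B hB.2, nsmul_eq_mul]
    ring
  rw [key]
  exact Finset.sum_nonneg fun A _ => inner_nonneg m q hq A
end

section
/- Let $T_k$ be the number of i.i.d. draws from $p=(p_1,\ldots,p_N)$ until $k$ distinct elements have been drawn. Then $P(T_k > n) = \sum_{A \subseteq H, |A| \le k-1} (-1)^{k-1-|A|} \binom{N-|A|-1}{k-1-|A|} p_A^n$, where $p_A = \sum_{i\in A} p_i$. -/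
/-- The number of distinct values among the first `m` draws, `Y_m`. -/
noncomputable def prefCount {N n : ℕ} (ω : Fin n → Fin N) (m : ℕ) : ℕ :=
  ((Finset.univ.filter (fun i : Fin n => (i : ℕ) < m)).image ω).card

open Finset

theorem sum_choose_mul_neg_one_pow_mul_choose {m M : ℕ} (h : m < M) :
    ∑ t ∈ range (m + 1), (M.choose t : ℤ) * ((-1) ^ (m - t) * (M - 1 - t).choose (m - t)) = 1 := by
  have upper_neg : ∀ t ∈ range (m + 1),
      (-1 : ℤ) ^ (m - t) * (M - 1 - t).choose (m - t) = Ring.choose ((m : ℤ) - M) (m - t) := by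
    intro t ht
    have ht : t ≤ m := Nat.lt_succ_iff.mp (mem_range.mp ht)
    rw [show (m : ℤ) - M = -((M - m : ℕ) : ℤ) by omega, Ring.choose_neg,
      show ((M - m : ℕ) : ℤ) + (m - t : ℕ) - 1 = ((M - 1 - t : ℕ) : ℤ) by omega,
      Ring.choose_natCast, Units.smul_def, Int.coe_negOnePow_natCast, smul_eq_mul]
  calc _ = ∑ t ∈ range (m + 1), Ring.choose (M : ℤ) t * Ring.choose ((m : ℤ) - M) (m - t) :=
        sum_congr rfl fun t ht => by rw [upper_neg t ht, Ring.choose_natCast]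
    _ = ∑ ij ∈ antidiagonal m, Ring.choose (M : ℤ) ij.1 * Ring.choose ((m : ℤ) - M) ij.2 :=
        (Nat.sum_antidiagonal_eq_sum_range_succ
          (fun i j => Ring.choose (M : ℤ) i * Ring.choose ((m : ℤ) - M) j) m).symm
    _ = Ring.choose ((M : ℤ) + ((m : ℤ) - M)) m := (Ring.add_choose_eq m (Commute.all _ _)).symm
    _ = 1 := by rw [add_sub_cancel, Ring.choose_natCast, Nat.choose_self, Nat.cast_one]

theorem sum_superset_apply_card {α M : Type*} [Fintype α] [DecidableEq α] [AddCommMonoid M]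
    (S : Finset α) (f : ℕ → M) :
    ∑ A with S ⊆ A, f #A
      = ∑ j ∈ range (Fintype.card α - #S + 1), (Fintype.card α - #S).choose j • f (#S + j) := by
  have hsupersets : ({A | S ⊆ A} : Finset (Finset α)) = (univ \ S).powerset.image (S ∪ ·) := by
    rw [← Icc_eq_image_powerset (subset_univ S)]
    ext A
    simp
  have hdisj : ∀ B ∈ (univ \ S).powerset, Disjoint S B := fun B hB =>
    disjoint_of_subset_right (mem_powerset.mp hB) disjoint_sdiff
  rw [hsupersets, sum_image, ← card_compl, ← sum_powerset_apply_card, compl_eq_univ_sdiff]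
  · exact sum_congr rfl fun B hB => by rw [card_union_of_disjoint (hdisj B hB)]
  · intro B hB B' hB' (h : S ∪ B = S ∪ B')
    rw [← union_sdiff_cancel_left (hdisj B hB), h, union_sdiff_cancel_left (hdisj B' hB')]

theorem sum_superset_neg_one_pow_mul_choose {α : Type*} [Fintype α] [DecidableEq α] {K : ℕ}
    (hK : K < Fintype.card α) (S : Finset α) :
    ∑ A ∈ univ.powerset.filter (fun A => #A ≤ K),
      (if S ⊆ A then (-1 : ℝ) ^ (K - #A) * ((Fintype.card α - #A - 1).choose (K - #A)) else 0)
      = if #S ≤ K then 1 else 0 := by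
  split_ifs with hS
  · set M := Fintype.card α - #S
    set m := K - #S
    calc _ = ∑ A with S ⊆ A, if #A ≤ K then
            (-1 : ℝ) ^ (K - #A) * ((Fintype.card α - #A - 1).choose (K - #A)) else 0 := by
          rw [powerset_univ, sum_filter, sum_filter]
          exact sum_congr rfl fun A _ => by simp only [← ite_and, and_comm]
      _ = ∑ j ∈ range (M + 1), M.choose j • if #S + j ≤ K then
            (-1 : ℝ) ^ (K - (#S + j)) * ((Fintype.card α - (#S + j) - 1).choose (K - (#S + j)))
            else 0 :=
          sum_superset_apply_card S fun c => if c ≤ K then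
            (-1 : ℝ) ^ (K - c) * ((Fintype.card α - c - 1).choose (K - c)) else 0
      _ = ∑ j ∈ range (m + 1), (M.choose j : ℝ) * ((-1) ^ (m - j) * (M - 1 - j).choose (m - j)) := by
          simp_rw [nsmul_eq_mul, mul_ite, mul_zero]
          rw [← sum_filter]
          refine sum_congr ?_ fun j _ => ?_
          · ext j
            simp only [mem_filter, mem_range]
            omega
          · rw [show K - (#S + j) = m - j by omega,
              show Fintype.card α - (#S + j) - 1 = M - 1 - j by omega]
      _ = 1 := mod_cast sum_choose_mul_neg_one_pow_mul_choose (by omega)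
  · refine sum_eq_zero fun A hA => if_neg fun hSA => hS ?_
    exact (card_le_card hSA).trans (mem_filter.mp hA).2

theorem exists_le_eq_of_succ_le_add_one {f : ℕ → ℕ} (hf : ∀ m, f (m + 1) ≤ f m + 1) {n k : ℕ}
    (h0 : f 0 ≤ k) (hn : k ≤ f n) : ∃ m ≤ n, f m = k := by
  induction n with
  | zero => exact ⟨0, le_rfl, le_antisymm h0 hn⟩
  | succ n ih =>
    by_cases hk : k ≤ f n
    · obtain ⟨m, hm, hfm⟩ := ih hk
      exact ⟨m, hm.trans n.le_succ, hfm⟩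
    · exact ⟨n + 1, le_rfl, by have := hf n; omega⟩

section prefCount

variable {N n : ℕ} (ω : Fin n → Fin N)

theorem prefCount_zero : prefCount ω 0 = 0 := by
  simp [prefCount]

theorem prefCount_succ_le (m : ℕ) : prefCount ω (m + 1) ≤ prefCount ω m + 1 := by
  have hsplit : univ.filter (fun i : Fin n => (i : ℕ) < m + 1)
      ⊆ univ.filter (fun i : Fin n => (i : ℕ) < m) ∪ univ.filter (fun i : Fin n => (i : ℕ) = m) := by
    intro i
    simp only [mem_filter, mem_union, mem_univ, true_and]
    omega
  have hlast : #((univ.filter (fun i : Fin n => (i : ℕ) = m)).image ω) ≤ 1 :=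
    card_image_le.trans <| card_le_one.mpr fun a ha b hb => Fin.ext <| by simp_all
  calc prefCount ω (m + 1)
      ≤ #((univ.filter (fun i : Fin n => (i : ℕ) < m)
          ∪ univ.filter (fun i : Fin n => (i : ℕ) = m)).image ω) :=
        card_le_card (image_subset_image hsplit)
    _ ≤ prefCount ω m + 1 := by
        rw [image_union]
        exact (card_union_le _ _).trans (Nat.add_le_add_left hlast _)

theorem prefCount_mono : Monotone (prefCount ω) := fun m m' h =>
  card_le_card <| image_subset_image fun i => by simp only [mem_filter, mem_univ, true_and]; omega

theorem prefCount_self : prefCount ω n = distinctCount ω := by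
  simp [prefCount, distinctCount]

theorem forall_prefCount_ne_iff (k : ℕ) :
    (∀ m ≤ n, prefCount ω m ≠ k) ↔ distinctCount ω < k := by
  rw [← prefCount_self]
  constructor
  · intro h
    by_contra! hk
    obtain ⟨m, hm, hfm⟩ := exists_le_eq_of_succ_le_add_one (prefCount_succ_le ω)
      ((prefCount_zero ω).trans_le k.zero_le) hk
    exact h m hm hfm
  · intro hk m hm hmk
    exact (prefCount_mono ω hm).not_gt (hmk ▸ hk)

end prefCount

theorem stmt_12_general (N n k : ℕ) (p : Fin N → ℝ)
    (hk1 : 1 ≤ k) (hkN : k ≤ N) :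
    prob p {ω : Fin n → Fin N | ∀ m ≤ n, prefCount ω m ≠ k}
      = ∑ A ∈ Finset.univ.powerset.filter (fun A : Finset (Fin N) => A.card ≤ k - 1),
          (-1 : ℝ) ^ (k - 1 - A.card) * (Nat.choose (N - A.card - 1) (k - 1 - A.card)) *
            (∑ i ∈ A, p i) ^ n := by
  have hcoeff (S : Finset (Fin N)) := sum_superset_neg_one_pow_mul_choose (K := k - 1)
    (by rw [Fintype.card_fin]; omega) S
  simp only [Fintype.card_fin] at hcoeff
  calc _ = ∑ ω : Fin n → Fin N, (∏ i, p (ω i)) * if #(univ.image ω) ≤ k - 1 then 1 else 0 := by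
        refine sum_congr rfl fun ω _ => ?_
        simp only [Set.indicator_apply, Set.mem_ofPred_eq, forall_prefCount_ne_iff, distinctCount,
          mul_ite, mul_one, mul_zero, Nat.lt_iff_le_pred hk1]
    _ = ∑ A ∈ univ.powerset.filter (fun A : Finset (Fin N) => #A ≤ k - 1),
          (-1 : ℝ) ^ (k - 1 - #A) * (N - #A - 1).choose (k - 1 - #A) *
            ∑ ω ∈ Fintype.piFinset fun _ => A, ∏ i, p (ω i) := by
        simp_rw [← hcoeff, mul_sum]
        rw [sum_comm]
        refine sum_congr rfl fun A _ => ?_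
        simp_rw [mul_ite, mul_zero, mul_comm (∏ i, p _)]
        rw [← sum_filter]
        congr 1
        ext ω
        simp [image_subset_iff, Fintype.mem_piFinset]
    _ = _ := by simp_rw [sum_pow']

/-- `P(T_k > n) = ∑_{A ⊆ H, |A| ≤ k-1} (-1)^{k-1-|A|} C(N-|A|-1, k-1-|A|) p_A^n`,
where `T_k > n` is the event that fewer than `k` distinct values appear among the
first `m` draws for every `m ≤ n`. -/
theorem stmt_12 (N n k : ℕ) (p : Fin N → ℝ) (hp : ∀ i, 0 ≤ p i) (hsum : ∑ i, p i = 1)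
    (hk1 : 1 ≤ k) (hkN : k ≤ N) :
    prob p {ω : Fin n → Fin N | ∀ m ≤ n, prefCount ω m ≠ k}
      = ∑ A ∈ Finset.univ.powerset.filter (fun A : Finset (Fin N) => A.card ≤ k - 1),
          (-1 : ℝ) ^ (k - 1 - A.card) * (Nat.choose (N - A.card - 1) (k - 1 - A.card)) *
            (∑ i ∈ A, p i) ^ n :=
  stmt_12_general N n k p hk1 hkN
end

section
/- Let $p_1 \ge p_2 \ge \cdots \ge p_{N_1} > 0$ and $p = \sum_{i=1}^{N_1} p_i$. For any $k$-tuple of distinct indices $(i_1,\ldots,i_k)$ from $\{1,\ldots,N_1\}$, define $E(i_1,\ldots,i_k) = \sum_{h=1}^{k} \frac{1}{p - \sum_{j=1}^{h-1} p_{i_j}}$. Then over all such $k$-tuples, $E$ is maximized at $(1,2,\ldots,k)$ and minimized at $(N_1, N_1-1, \ldots, N_1-k+1)$, i.e. $E(N_1,\ldots,N_1-k+1) \le E(i_1,\ldots,i_k) \le E(1,\ldots,k)$. -/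
/-- `E(i_1, …, i_k) = ∑_{h=1}^{k} 1 / (p - ∑_{j=1}^{h-1} p_{i_j})`, the conditional
expected number of draws for the hosts `i_1, …, i_k` to be parasitized in that order. -/
noncomputable def Eord {N₁ : ℕ} (p : Fin N₁ → ℝ) {k : ℕ} (f : Fin k → Fin N₁) : ℝ :=
  ∑ h : Fin k, 1 / ((∑ i, p i) - ∑ j ∈ Finset.univ.filter (fun j : Fin k => j < h), p (f j))

/-- The increasing tuple `(1, 2, …, k)`. -/
def idTup (k N₁ : ℕ) (hk : k ≤ N₁) : Fin k → Fin N₁ := fun j => Fin.castLE hk j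

/-- The decreasing tuple `(N₁, N₁-1, …, N₁-k+1)`. -/
def revTup (k N₁ : ℕ) (hk : k ≤ N₁) : Fin k → Fin N₁ :=
  fun j => ⟨N₁ - 1 - (j : ℕ), by have := j.isLt; omega⟩


open Finset

lemma my_card_filter_lt_fin {k : ℕ} (h : Fin k) :
    (univ.filter (fun j : Fin k => j < h)).card = h.val := by
  have : univ.filter (fun j : Fin k => j < h) = Finset.Iio h := by ext; simp
  rw [this, Fin.card_Iio]

lemma my_sum_le_top {N : ℕ} (p : Fin N → ℝ) (hmono : ∀ i j : Fin N, i ≤ j → p j ≤ p i) :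
    ∀ m (T : Finset (Fin N)), T.card = m →
      ∑ i ∈ T, p i ≤ ∑ i ∈ univ.filter (fun i : Fin N => (i : ℕ) < m), p i := by
  intro m
  induction m with
  | zero => intro T hT; simp [Finset.card_eq_zero.mp hT]
  | succ m ih =>
    intro T hT
    have hne : T.Nonempty := Finset.card_pos.mp (by omega)
    set t := T.max' hne with ht
    have hmN : m < N := by
      have := T.card_le_univ; simp at this; omega
    have hsub : T ⊆ Finset.Iic t := fun i hi => Finset.mem_Iic.2 (Finset.le_max' T i hi)
    have htm : m ≤ t.val := by
      have := Finset.card_le_card hsub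
      rw [Fin.card_Iic] at this; omega
    have hT' : (T.erase t).card = m := by
      rw [Finset.card_erase_of_mem (T.max'_mem hne)]; omega
    have hfilter : univ.filter (fun i : Fin N => (i : ℕ) < m + 1)
        = insert ⟨m, hmN⟩ (univ.filter (fun i : Fin N => (i : ℕ) < m)) := by
      ext i; simp [Fin.ext_iff]; omega
    rw [hfilter, Finset.sum_insert (by simp)]
    rw [← Finset.add_sum_erase _ _ (T.max'_mem hne)]
    exact add_le_add (hmono ⟨m, hmN⟩ t (by simp [Fin.le_def]; omega)) (ih _ hT')

lemma my_sum_ge_bot {N : ℕ} (p : Fin N → ℝ) (hmono : ∀ i j : Fin N, i ≤ j → p j ≤ p i) :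
    ∀ m (T : Finset (Fin N)), T.card = m →
      ∑ i ∈ univ.filter (fun i : Fin N => N - m ≤ (i : ℕ)), p i ≤ ∑ i ∈ T, p i := by
  intro m
  induction m with
  | zero =>
    intro T hT
    have hemp : univ.filter (fun i : Fin N => N - 0 ≤ (i : ℕ)) = ∅ := by
      ext i
      simp only [Finset.mem_filter, Finset.mem_univ, true_and, Finset.notMem_empty, iff_false]
      have := i.isLt; omega
    rw [Finset.card_eq_zero.mp hT, hemp]
  | succ m ih =>
    intro T hT
    have hne : T.Nonempty := Finset.card_pos.mp (by omega)
    set t := T.min' hne with ht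
    have hmN : m < N := by
      have := T.card_le_univ; simp at this; omega
    have hsub : T ⊆ Finset.Ici t := fun i hi => Finset.mem_Ici.2 (Finset.min'_le T i hi)
    have htm : t.val ≤ N - (m + 1) := by
      have := Finset.card_le_card hsub
      rw [Fin.card_Ici] at this; omega
    have hT' : (T.erase t).card = m := by
      rw [Finset.card_erase_of_mem (T.min'_mem hne)]; omega
    have hfilter : univ.filter (fun i : Fin N => N - (m + 1) ≤ (i : ℕ))
        = insert ⟨N - (m + 1), by omega⟩ (univ.filter (fun i : Fin N => N - m ≤ (i : ℕ))) := by
      ext i; simp [Fin.ext_iff]; omega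
    rw [hfilter, Finset.sum_insert (by simp; omega)]
    rw [← Finset.add_sum_erase _ _ (T.min'_mem hne)]
    exact add_le_add (hmono t ⟨N - (m + 1), by omega⟩ (by simp [Fin.le_def]; omega)) (ih _ hT')

/-- Proposition 4.2: if `p_1 ≥ p_2 ≥ ⋯ ≥ p_{N₁} > 0`, then over all `k`-tuples of distinct
indices, `E` is minimized at `(N₁, …, N₁-k+1)` and maximized at `(1, …, k)`. -/
theorem stmt_15 (N₁ k : ℕ) (hk : 1 ≤ k) (hkN : k ≤ N₁) (p : Fin N₁ → ℝ)
    (hpos : ∀ i, 0 < p i) (hmono : ∀ i j : Fin N₁, i ≤ j → p j ≤ p i)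
    (f : Fin k → Fin N₁) (hf : Function.Injective f) :
    Eord p (revTup k N₁ hkN) ≤ Eord p f ∧ Eord p f ≤ Eord p (idTup k N₁ hkN) := by
  classical
  set P := ∑ i, p i with hP
  -- generic facts for an injective tuple g
  have himg : ∀ (g : Fin k → Fin N₁), Function.Injective g → ∀ h : Fin k,
      (∑ j ∈ univ.filter (fun j : Fin k => j < h), p (g j)
        = ∑ i ∈ (univ.filter (fun j : Fin k => j < h)).image g, p i)
      ∧ ((univ.filter (fun j : Fin k => j < h)).image g).card = h.val := by
    intro g hg h
    constructor
    · exact (Finset.sum_image (fun a _ b _ hab => hg hab)).symm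
    · rw [Finset.card_image_of_injective _ hg, my_card_filter_lt_fin]
  -- positivity of the remaining mass
  have hposrem : ∀ (g : Fin k → Fin N₁), Function.Injective g → ∀ h : Fin k,
      0 < P - ∑ j ∈ univ.filter (fun j : Fin k => j < h), p (g j) := by
    intro g hg h
    obtain ⟨heq, hcard⟩ := himg g hg h
    rw [heq]
    set T := (univ.filter (fun j : Fin k => j < h)).image g with hT
    have hsplit : ∑ i ∈ T, p i + ∑ i ∈ Tᶜ, p i = P := Finset.sum_add_sum_compl T p
    have hne : Tᶜ.Nonempty := by
      rw [← Finset.card_pos, Finset.card_compl, Fintype.card_fin, hcard]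
      have := h.isLt; omega
    have : 0 < ∑ i ∈ Tᶜ, p i := Finset.sum_pos (fun i _ => hpos i) hne
    linarith
  -- partial sums of f are bounded above by those of idTup
  have hid_inj : Function.Injective (idTup k N₁ hkN) := fun a b hab => by
    simpa [idTup, Fin.ext_iff] using hab
  have hrev_inj : Function.Injective (revTup k N₁ hkN) := fun a b hab => by
    simp only [revTup, Fin.ext_iff] at hab ⊢
    have := a.isLt; have := b.isLt; omega
  have hid_eq : ∀ h : Fin k,
      ∑ j ∈ univ.filter (fun j : Fin k => j < h), p (idTup k N₁ hkN j)
        = ∑ i ∈ univ.filter (fun i : Fin N₁ => (i : ℕ) < h.val), p i := by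
    intro h
    rw [(himg _ hid_inj h).1]
    congr 1
    ext i
    simp only [Finset.mem_image, Finset.mem_filter, Finset.mem_univ, true_and, idTup,
      Fin.lt_def, Fin.castLE, Fin.ext_iff, Fin.exists_iff]
    have := i.isLt; have := h.isLt
    constructor
    · rintro ⟨a, ha, hlt, rfl⟩; omega
    · intro hi; exact ⟨i.val, by omega, by omega, rfl⟩
  have hrev_eq : ∀ h : Fin k,
      ∑ j ∈ univ.filter (fun j : Fin k => j < h), p (revTup k N₁ hkN j)
        = ∑ i ∈ univ.filter (fun i : Fin N₁ => N₁ - h.val ≤ (i : ℕ)), p i := by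
    intro h
    rw [(himg _ hrev_inj h).1]
    congr 1
    ext i
    simp only [Finset.mem_image, Finset.mem_filter, Finset.mem_univ, true_and, revTup,
      Fin.lt_def, Fin.ext_iff, Fin.exists_iff]
    have := i.isLt; have := h.isLt
    constructor
    · rintro ⟨a, ha, hlt, heq⟩; omega
    · intro hi; exact ⟨N₁ - 1 - i.val, by omega, by omega, by omega⟩
  have hupper : ∀ h : Fin k,
      ∑ j ∈ univ.filter (fun j : Fin k => j < h), p (f j)
        ≤ ∑ j ∈ univ.filter (fun j : Fin k => j < h), p (idTup k N₁ hkN j) := by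
    intro h
    rw [(himg f hf h).1, hid_eq h]
    exact my_sum_le_top p hmono h.val _ (himg f hf h).2
  have hlower : ∀ h : Fin k,
      ∑ j ∈ univ.filter (fun j : Fin k => j < h), p (revTup k N₁ hkN j)
        ≤ ∑ j ∈ univ.filter (fun j : Fin k => j < h), p (f j) := by
    intro h
    rw [(himg f hf h).1, hrev_eq h]
    exact my_sum_ge_bot p hmono h.val _ (himg f hf h).2
  constructor
  · unfold Eord
    apply Finset.sum_le_sum
    intro h _
    apply one_div_le_one_div_of_le (hposrem f hf h)
    have := hlower h; linarith
  · unfold Eord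
    apply Finset.sum_le_sum
    intro h _
    apply one_div_le_one_div_of_le (hposrem _ hid_inj h)
    have := hupper h; linarith
end

section
/- Let $p_1 \ge p_2 \ge \cdots \ge p_{N_1} > 0$ and $p = \sum_{i=1}^{N_1} p_i$. For a $k$-tuple $I = (i_1,\ldots,i_k)$ of distinct indices, define $w(I) = \frac{\prod_{j=1}^{k} p_{i_j}}{\prod_{h=0}^{k-1}\left(p - \sum_{j=1}^{h} p_{i_j}\right)}$. Then $w(1,2,\ldots,k) \ge w(I)$ for every $k$-tuple $I$ of distinct indices from $\{1,\ldots,N_1\}$. -/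
/-- `w(I) = (∏_{j=1}^k p_{i_j}) / ∏_{h=0}^{k-1} (p - ∑_{j=1}^{h} p_{i_j})`, the probability
that the first `k` parasitized hosts are `i_1, …, i_k`, in that order. -/
noncomputable def wOrd {N₁ : ℕ} (p : Fin N₁ → ℝ) {k : ℕ} (f : Fin k → Fin N₁) : ℝ :=
  (∏ j : Fin k, p (f j)) /
    ∏ h : Fin k, ((∑ i, p i) - ∑ j ∈ Finset.univ.filter (fun j : Fin k => j < h), p (f j))

/-!
Among `m` distinct hosts, the `m` largest probabilities give both the largest product and the
largest sum. Hence the numerator of `w` is largest for `(1, …, k)`, while each denominator factor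
`p - (p_{i_1} + ⋯ + p_{i_h})` is smallest for `(1, …, k)`; all of these factors are positive
because `i_{h+1}` is missing from the partial sum.
-/

open Finset Function

namespace Finset

variable {ι : Type*} [LinearOrder ι] {s t : Finset ι}

/-- An exchange argument: every element of `t \ s` lies below every element of `s \ t`, and the
two differences have the same size. -/
lemma sum_le_sum_of_isLowerSet {M : Type*} [AddCommMonoid M] [PartialOrder M]
    [IsOrderedCancelAddMonoid M] {g : ι → M} (hg : Antitone g) (hst : #s = #t)
    (ht : IsLowerSet (t : Set ι)) : ∑ i ∈ s, g i ≤ ∑ i ∈ t, g i := by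
  classical
  rw [← sum_sdiff_le_sum_sdiff]
  obtain hempty | hne := (s \ t).eq_empty_or_nonempty
  · have : t \ s = ∅ := card_eq_zero.1 (by rw [← card_sdiff_comm hst, hempty, card_empty])
    rw [hempty, this]
  set m := (s \ t).min' hne
  have hm : m ∈ s \ t := min'_mem _ hne
  calc ∑ i ∈ s \ t, g i ≤ #(s \ t) • g m :=
        sum_le_card_nsmul _ _ _ fun x hx => hg (min'_le _ x hx)
    _ = #(t \ s) • g m := by rw [card_sdiff_comm hst]
    _ ≤ ∑ i ∈ t \ s, g i := card_nsmul_le_sum _ _ _ fun y hy => hg <|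
        le_of_lt <| not_le.1 fun hmy => (mem_sdiff.1 hm).2 (ht hmy (mem_sdiff.1 hy).1)

lemma prod_le_prod_of_isLowerSet {g : ι → ℝ} (hpos : ∀ i, 0 < g i) (hg : Antitone g)
    (hst : #s = #t) (ht : IsLowerSet (t : Set ι)) : ∏ i ∈ s, g i ≤ ∏ i ∈ t, g i := by
  have hlog : Antitone fun i => Real.log (g i) := fun a b hab => Real.log_le_log (hpos b) (hg hab)
  simpa only [Real.exp_sum, Real.exp_log (hpos _)] using
    Real.exp_le_exp.2 (sum_le_sum_of_isLowerSet hlog hst ht)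

end Finset

lemma sum_comp_lt_sum_univ {α ι : Type*} [Fintype ι] {p : ι → ℝ} (hpos : ∀ i, 0 < p i)
    {f : α → ι} (hf : Injective f) {s : Finset α} {a : α} (ha : a ∉ s) :
    ∑ j ∈ s, p (f j) < ∑ i, p i := by
  classical
  rw [← sum_image hf.injOn]
  exact sum_lt_sum_of_subset (subset_univ _) (mem_univ (f a))
    (fun h => ha (hf.mem_finset_image.1 h)) (hpos _) fun i _ _ => (hpos i).le

lemma isLowerSet_image_castLE {k n : ℕ} (hkn : k ≤ n) {u : Finset (Fin k)}
    (hu : IsLowerSet (u : Set (Fin k))) :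
    IsLowerSet ((u.image (Fin.castLE hkn) : Finset (Fin n)) : Set (Fin n)) := by
  rw [coe_image]
  rintro _ b hba ⟨a, ha, rfl⟩
  have hbk : (b : ℕ) < k := lt_of_le_of_lt hba a.isLt
  exact ⟨⟨b, hbk⟩, hu (show (⟨b, hbk⟩ : Fin k) ≤ a from hba) ha, rfl⟩

section Rearrangement

variable {k n : ℕ} (hkn : k ≤ n) {p : Fin n → ℝ} {f : Fin k → Fin n} {u : Finset (Fin k)}

lemma sum_comp_le_sum_castLE (hp : Antitone p) (hf : Injective f)
    (hu : IsLowerSet (u : Set (Fin k))) :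
    ∑ j ∈ u, p (f j) ≤ ∑ j ∈ u, p (Fin.castLE hkn j) := by
  rw [← sum_image hf.injOn, ← sum_image (Fin.castLE_injective hkn).injOn]
  exact sum_le_sum_of_isLowerSet hp (by rw [card_image_of_injective _ hf,
    card_image_of_injective _ (Fin.castLE_injective hkn)]) (isLowerSet_image_castLE hkn hu)

lemma prod_comp_le_prod_castLE (hpos : ∀ i, 0 < p i) (hp : Antitone p) (hf : Injective f) :
    ∏ j, p (f j) ≤ ∏ j, p (Fin.castLE hkn j) := by
  rw [← prod_image hf.injOn, ← prod_image (Fin.castLE_injective hkn).injOn]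
  exact prod_le_prod_of_isLowerSet hpos hp (by rw [card_image_of_injective _ hf,
    card_image_of_injective _ (Fin.castLE_injective hkn)])
    (isLowerSet_image_castLE hkn (by simpa using isLowerSet_univ))

end Rearrangement

theorem stmt_16_general (N₁ k : ℕ) (hkN : k ≤ N₁) (p : Fin N₁ → ℝ)
    (hpos : ∀ i, 0 < p i) (hmono : ∀ i j : Fin N₁, i ≤ j → p j ≤ p i)
    (f : Fin k → Fin N₁) (hf : Function.Injective f) :
    wOrd p f ≤ wOrd p (idTup k N₁ hkN) := by
  have hdenom_pos : ∀ g : Fin k → Fin N₁, Injective g → ∀ h : Fin k,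
      0 < (∑ i, p i) - ∑ j ∈ univ.filter (fun j : Fin k => j < h), p (g j) :=
    fun g hg h => sub_pos.2 (sum_comp_lt_sum_univ hpos hg (a := h) (by simp))
  have hid : Injective (idTup k N₁ hkN) := Fin.castLE_injective hkN
  refine div_le_div₀ (prod_nonneg fun j _ => (hpos _).le)
    (prod_comp_le_prod_castLE hkN hpos hmono hf) (prod_pos fun h _ => hdenom_pos _ hid h)
    (prod_le_prod (fun h _ => (hdenom_pos _ hid h).le) fun h _ => ?_)
  rw [filter_gt_eq_Iio]
  exact sub_le_sub_left (sum_comp_le_sum_castLE hkN hmono hf (by simpa using isLowerSet_Iio h)) _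

/-- Proposition 4.3 (mode): if `p_1 ≥ p_2 ≥ ⋯ ≥ p_{N₁} > 0`, the identity ordering
`(1, 2, …, k)` maximizes `w` over all `k`-tuples of distinct indices. -/
theorem stmt_16 (N₁ k : ℕ) (hk : 1 ≤ k) (hkN : k ≤ N₁) (p : Fin N₁ → ℝ)
    (hpos : ∀ i, 0 < p i) (hmono : ∀ i j : Fin N₁, i ≤ j → p j ≤ p i)
    (f : Fin k → Fin N₁) (hf : Function.Injective f) :
    wOrd p f ≤ wOrd p (idTup k N₁ hkN) :=
  stmt_16_general N₁ k hkN p hpos hmono f hf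
end

section
/- Let $p = (p_1,\ldots,p_N)$ be a probability distribution with $p_1 < p_2$, let $0 < h \le (p_2-p_1)/2$, and let $p' = (p_1+h, p_2-h, p_3,\ldots,p_N)$ (a Robin Hood transfer). Then for every $n \ge 1$ and every $1 \le k \le N-1$, $P_p(Y_n \le k) \ge P_{p'}(Y_n \le k)$, where $Y_n$ is the number of distinct values in $n$ i.i.d. draws from the respective distribution. -/
/-!
Merge the value `b = 2` into `a = 1`: every sequence `ω` arises from exactly one sequence `τ`
avoiding `b` by relabelling some set `T` of the positions `A` where `τ = a` to `b`. Along such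
a fibre the weight is `p_b ^ |T| p_a ^ (|A| - |T|)` times a common factor, and the number of
distinct values is `d + [T ≠ A] + [T ≠ ∅]`. Hence, up to that factor, the fibre contributes
to `P(Y_n ≤ k)` either `0`, or `(p_a + p_b) ^ |A|`, or (when `k = d + 1`)
`p_a ^ |A| + p_b ^ |A|`. A Robin Hood transfer keeps `p_a + p_b` and brings the two values
together, which can only decrease the last sum, by convexity of `t ↦ t ^ m`.
-/

open Finset

lemma add_pow_add_sub_pow_le {x y h : ℝ} (hx : 0 ≤ x) (hh : 0 ≤ h) (hxy : x + h ≤ y - h)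
    (m : ℕ) : (x + h) ^ m + (y - h) ^ m ≤ x ^ m + y ^ m := by
  -- both increments are `h` times a geometric sum, and the one for `y` has the larger terms
  have hgeom : ∑ i ∈ range m, (x + h) ^ i * x ^ (m - 1 - i)
      ≤ ∑ i ∈ range m, y ^ i * (y - h) ^ (m - 1 - i) :=
    sum_le_sum fun i _ => mul_le_mul (pow_le_pow_left₀ (by linarith) (by linarith) i)
      (pow_le_pow_left₀ hx (by linarith) _) (pow_nonneg hx _) (pow_nonneg (by linarith) _)
  have hx' := geom_sum₂_mul (x + h) x m
  have hy' := geom_sum₂_mul y (y - h) m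
  rw [add_sub_cancel_left] at hx'
  rw [sub_sub_cancel] at hy'
  nlinarith [mul_le_mul_of_nonneg_right hgeom hh]

lemma card_eq_card_erase_add_ite {α : Type*} [DecidableEq α] (s : Finset α) (a : α) :
    #s = #(s.erase a) + if a ∈ s then 1 else 0 := by
  split_ifs with h
  · exact (card_erase_add_one h).symm
  · rw [erase_eq_of_notMem h, add_zero]

section Relabel

variable {ι α : Type*} [Fintype ι] [DecidableEq ι] [DecidableEq α]

lemma sum_eq_sum_sum_powerset_piecewise [Fintype α] {M : Type*} [AddCommMonoid M] {a b : α}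
    (hab : a ≠ b) (f : (ι → α) → M) :
    ∑ ω, f ω = ∑ τ ∈ univ.filter (fun τ : ι → α => b ∉ univ.image τ),
      ∑ T ∈ (univ.filter (τ · = a)).powerset, f (T.piecewise (fun _ => b) τ) := by
  -- the inverse sends `ω` to (`ω` with `b` merged into `a`, the positions where `ω = b`)
  have merge_piecewise : ∀ ω : ι → α, (univ.filter (ω · = b)).piecewise (fun _ => b)
      (fun i => if ω i = b then a else ω i) = ω := by
    intro ω
    ext i
    by_cases h : ω i = b <;> simp [h]
  rw [sum_sigma']
  refine sum_nbij' (fun ω => ⟨fun i => if ω i = b then a else ω i, univ.filter (ω · = b)⟩)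
    (fun x => x.2.piecewise (fun _ => b) x.1) ?_ (fun _ _ => mem_univ _)
    (fun ω _ => merge_piecewise ω) ?_
    (fun ω _ => by rw [merge_piecewise])
  · intro ω _
    simp only [mem_sigma, mem_filter, mem_univ, true_and, mem_powerset, mem_image, not_exists]
    refine ⟨fun i => ?_, fun i hi => ?_⟩
    · split_ifs with h <;> simp_all
    · simp_all
  · rintro ⟨τ, T⟩ h
    simp only [mem_sigma, mem_filter, mem_univ, true_and, mem_powerset, mem_image, not_exists,
      subset_iff] at h
    refine Sigma.ext (funext fun i => ?_) (heq_of_eq (Finset.ext fun i => ?_))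
    · by_cases hi : i ∈ T <;> simp [hi, h.1 i, h.2]
    · by_cases hi : i ∈ T <;> simp [hi, h.1 i]

lemma prod_piecewise_const {M : Type*} [CommMonoid M] (r : α → M) (τ : ι → α) {a : α} (b : α)
    {T : Finset ι} (hT : T ⊆ univ.filter (τ · = a)) :
    ∏ i, r (T.piecewise (fun _ => b) τ i)
      = r b ^ #T * r a ^ (#(univ.filter (τ · = a)) - #T)
        * ∏ i ∈ univ.filter (τ · ≠ a), r (τ i) := by
  rw [← prod_filter_mul_prod_filter_not univ (τ · = a)]
  congr 1
  · rw [← prod_sdiff hT, mul_comm, ← card_sdiff_of_subset hT]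
    congr 1
    · rw [prod_congr rfl fun i hi => by rw [piecewise_eq_of_mem _ _ _ hi], prod_const]
    · rw [← prod_const]
      refine prod_congr rfl fun i hi => ?_
      rw [piecewise_eq_of_notMem _ _ _ (mem_sdiff.1 hi).2, (mem_filter.1 (mem_sdiff.1 hi).1).2]
  · refine prod_congr rfl fun i hi => ?_
    rw [piecewise_eq_of_notMem]
    exact fun hiT => (mem_filter.1 hi).2 (mem_filter.1 (hT hiT)).2

lemma card_image_piecewise {τ : ι → α} {a b : α} (hab : a ≠ b) (hτ : ∀ i, τ i ≠ b)
    {T : Finset ι} (hT : T ⊆ univ.filter (τ · = a)) :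
    #(univ.image (T.piecewise (fun _ => b) τ)) = #((univ.image τ).erase a)
      + (if T = univ.filter (τ · = a) then 0 else 1) + (if T = ∅ then 0 else 1) := by
  set ω := T.piecewise (fun _ => b) τ
  have hωT : ∀ i ∈ T, ω i = b := fun i hi => piecewise_eq_of_mem _ _ _ hi
  have hωTc : ∀ i ∉ T, ω i = τ i := fun i hi => piecewise_eq_of_notMem _ _ _ hi
  have hTa : ∀ i ∈ T, τ i = a := fun i hi => (mem_filter.1 (hT hi)).2
  have hb : b ∈ univ.image ω ↔ ¬T = ∅ := by
    simp only [mem_image, mem_univ, true_and, ← ne_eq, ← nonempty_iff_ne_empty]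
    refine ⟨fun ⟨i, hi⟩ => ⟨i, ?_⟩, fun ⟨i, hi⟩ => ⟨i, hωT i hi⟩⟩
    by_contra hiT
    exact hτ i (hωTc i hiT ▸ hi)
  have ha : a ∈ (univ.image ω).erase b ↔ ¬T = univ.filter (τ · = a) := by
    simp only [mem_erase, mem_image, mem_univ, true_and, hab, ne_eq, not_false_eq_true]
    constructor
    · rintro ⟨i, hi⟩ hTA
      by_cases hiT : i ∈ T
      · exact hab (hωT i hiT ▸ hi).symm
      · exact hiT (hTA ▸ mem_filter.2 ⟨mem_univ i, hωTc i hiT ▸ hi⟩)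
    · intro hTA
      obtain ⟨i, hiA, hiT⟩ := exists_of_ssubset (hT.ssubset_of_ne hTA)
      exact ⟨i, (hωTc i hiT).trans (mem_filter.1 hiA).2⟩
  have hS : ((univ.image ω).erase b).erase a = (univ.image τ).erase a := by
    ext v
    simp only [mem_erase, mem_image, mem_univ, true_and]
    constructor
    · rintro ⟨hva, hvb, i, rfl⟩
      by_cases hiT : i ∈ T
      · exact absurd (hωT i hiT) hvb
      · exact ⟨hva, i, (hωTc i hiT).symm⟩
    · rintro ⟨hva, i, rfl⟩
      have hiT : i ∉ T := fun hiT => hva (hTa i hiT)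
      exact ⟨hva, hτ i, i, hωTc i hiT⟩
  rw [card_eq_card_erase_add_ite _ b, card_eq_card_erase_add_ite _ a, hS]
  simp only [ha, hb, ite_not]

end Relabel

section SplitWeight

variable {ι : Type*} [DecidableEq ι]

/-- The weight of the sequences with at most `k` distinct values obtained by relabelling some
`T ⊆ A` to `b` in a sequence `τ` that avoids `b`, equals `a` exactly on `A` and takes `d` other
values, divided by the weight of `τ` off `A`; here `x = p a` and `y = p b`. -/
noncomputable def splitWeight (A : Finset ι) (d k : ℕ) (x y : ℝ) : ℝ :=
  ∑ T ∈ A.powerset, if d + (if T = A then 0 else 1) + (if T = ∅ then 0 else 1) ≤ k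
    then y ^ #T * x ^ (#A - #T) else 0

lemma splitWeight_of_lt {A : Finset ι} (hA : A.Nonempty) {d k : ℕ} (hk : k < d + 1)
    (x y : ℝ) : splitWeight A d k x y = 0 := by
  refine sum_eq_zero fun T _ => if_neg ?_
  split_ifs with h₁ h₂ <;> first | omega | exact absurd (h₁ ▸ h₂) hA.ne_empty

lemma splitWeight_of_eq {A : Finset ι} (hA : A.Nonempty) {d k : ℕ} (hk : k = d + 1)
    (x y : ℝ) : splitWeight A d k x y = x ^ #A + y ^ #A := by
  have hA₀ : A ≠ ∅ := hA.ne_empty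
  rw [splitWeight, ← sum_subset (s₁ := {∅, A}), sum_pair hA₀.symm]
  · simp [hA₀, hA₀.symm, hk]
  · simp [insert_subset_iff]
  · intro T _ hT
    simp only [mem_insert, mem_singleton, not_or] at hT
    rw [if_neg (by simp only [hT.1, hT.2, if_false]; omega)]

lemma splitWeight_of_le (A : Finset ι) {d k : ℕ} (hk : d + 2 ≤ k) (x y : ℝ) :
    splitWeight A d k x y = (x + y) ^ #A := by
  rw [splitWeight, add_comm, ← sum_pow_mul_eq_add_pow]
  refine sum_congr rfl fun T _ => if_pos ?_
  split_ifs <;> omega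

lemma splitWeight_le_of_transfer (A : Finset ι) (d k : ℕ) {x y x' y' : ℝ} (hx : 0 ≤ x)
    (hxx' : x ≤ x') (hx'y' : x' ≤ y') (hsum : x' + y' = x + y) :
    splitWeight A d k x' y' ≤ splitWeight A d k x y := by
  rcases A.eq_empty_or_nonempty with rfl | hA
  · simp [splitWeight]
  rcases lt_or_ge k (d + 1) with hk | hk
  · rw [splitWeight_of_lt hA hk, splitWeight_of_lt hA hk]
  rcases lt_or_ge k (d + 2) with hk₂ | hk₂
  · rw [splitWeight_of_eq hA (by omega), splitWeight_of_eq hA (by omega)]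
    have := add_pow_add_sub_pow_le hx (sub_nonneg.2 hxx') (y := y) (by linarith) #A
    rwa [add_sub_cancel, show y - (x' - x) = y' by linarith] at this
  · rw [splitWeight_of_le A hk₂, splitWeight_of_le A hk₂, hsum]

end SplitWeight

lemma prob_distinctCount_le_le_of_transfer {N n : ℕ} (k : ℕ) {p q : Fin N → ℝ} {a b : Fin N}
    (hab : a ≠ b) (hp : ∀ v, 0 ≤ p v) (hqp : ∀ v, v ≠ a → v ≠ b → q v = p v)
    (hsum : q a + q b = p a + p b) (hpq : p a ≤ q a) (hq : q a ≤ q b) :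
    prob q {ω : Fin n → Fin N | distinctCount ω ≤ k}
      ≤ prob p {ω : Fin n → Fin N | distinctCount ω ≤ k} := by
  simp only [prob, Set.indicator_apply, Set.mem_ofPred_eq]
  rw [sum_eq_sum_sum_powerset_piecewise hab, sum_eq_sum_sum_powerset_piecewise hab]
  refine sum_le_sum fun τ hτ => ?_
  replace hτ : ∀ i, τ i ≠ b := fun i hi =>
    (mem_filter.1 hτ).2 (hi ▸ mem_image_of_mem τ (mem_univ i))
  have hfiber : ∀ r : Fin N → ℝ,
      ∑ T ∈ (univ.filter (τ · = a)).powerset,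
        (if distinctCount (T.piecewise (fun _ => b) τ) ≤ k
          then ∏ i, r (T.piecewise (fun _ => b) τ i) else 0)
      = splitWeight (univ.filter (τ · = a)) #((univ.image τ).erase a) k (r a) (r b)
        * ∏ i ∈ univ.filter (τ · ≠ a), r (τ i) := by
    intro r
    rw [splitWeight, sum_mul]
    refine sum_congr rfl fun T hT => ?_
    rw [mem_powerset] at hT
    rw [distinctCount, card_image_piecewise hab hτ hT, prod_piecewise_const r τ b hT, ite_mul,
      zero_mul]
  have hrest : ∏ i ∈ univ.filter (τ · ≠ a), q (τ i) = ∏ i ∈ univ.filter (τ · ≠ a), p (τ i) :=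
    prod_congr rfl fun i hi => hqp _ (mem_filter.1 hi).2 (hτ i)
  rw [hfiber, hfiber, hrest]
  exact mul_le_mul_of_nonneg_right
    (splitWeight_le_of_transfer _ _ _ (hp a) hpq hq (by linarith))
    (prod_nonneg fun i _ => hp _)

/-- Theorem 6.1 (weak form): a Robin Hood transfer of mass `h` from `p_2` to `p_1`
(where `p_1 < p_2`, `0 < h ≤ (p_2 - p_1)/2`) decreases `P(Y_n ≤ k)`:
`P_p(Y_n ≤ k) ≥ P_{p'}(Y_n ≤ k)` for all `n ≥ 1` and `1 ≤ k ≤ N - 1`. -/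
theorem stmt_17 (N : ℕ) (hN : 2 ≤ N) (p : Fin N → ℝ) (hp : ∀ i, 0 ≤ p i) (h : ℝ)
    (hh0 : 0 < h) (hh : h ≤ (p ⟨1, by omega⟩ - p ⟨0, by omega⟩) / 2) (n k : ℕ) :
    prob (fun i : Fin N => if (i : ℕ) = 0 then p i + h else if (i : ℕ) = 1 then p i - h else p i)
        {ω : Fin n → Fin N | distinctCount ω ≤ k}
      ≤ prob p {ω : Fin n → Fin N | distinctCount ω ≤ k} := by
  refine prob_distinctCount_le_le_of_transfer k (a := ⟨0, by omega⟩) (b := ⟨1, by omega⟩)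
    (by simp) hp (fun v hv0 hv1 => ?_) (by simp) (by simp; linarith) (by simp; linarith)
  rw [if_neg (fun h => hv0 (Fin.ext h)), if_neg (fun h => hv1 (Fin.ext h))]
end
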